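/- For the Enneper-type surface x(u,v) = (1/6)(u³−v³+3u−3v, −u³+v³+3u−3v, 3u²−3v²) with unit normal l such that ⟨l,l⟩=1 and l orthogonal to x_u and x_v, computed as the normalized Lorentz cross product of x_u and x_v, the second fundamental form coefficients satisfy L = ⟨x_uu,l⟩ = 1, M = ⟨x_uv,l⟩ = 0, N = ⟨x_vv,l⟩ = 1, for u ≠ v. Consequently H = M/F = 0 and K = (M² − LN)/F² = −4/(u−v)⁴, where F = (1/2)(u−v)². -/

import Mathlib

/-- Indefinite inner product of signature (-,+,+) on ℝ³₁ = ℝ × ℝ × ℝ. -/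
noncomputable def ip (a b : ℝ × ℝ × ℝ) : ℝ :=
  -(a.1 * b.1) + a.2.1 * b.2.1 + a.2.2 * b.2.2

noncomputable def pderivU (f : ℝ → ℝ → ℝ) (u v : ℝ) : ℝ := deriv (fun t => f t v) u
noncomputable def pderivV (f : ℝ → ℝ → ℝ) (u v : ℝ) : ℝ := deriv (fun t => f u t) v

/-- The Lorentz cross product: the unique vector c with ⟨c,w⟩ = det(a,b,w) for all w. -/
noncomputable def lcross (a b : ℝ × ℝ × ℝ) : ℝ × ℝ × ℝ :=
  (-(a.2.1 * b.2.2 - a.2.2 * b.2.1),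
   a.2.2 * b.1 - a.1 * b.2.2,
   a.1 * b.2.1 - a.2.1 * b.1)

/-- The Enneper-type map. -/
noncomputable def xE (u v : ℝ) : ℝ × ℝ × ℝ :=
  ((u^3 - v^3 + 3*u - 3*v)/6, (-u^3 + v^3 + 3*u - 3*v)/6, (3*u^2 - 3*v^2)/6)

noncomputable def vecPderivU (x : ℝ → ℝ → ℝ × ℝ × ℝ) (u v : ℝ) : ℝ × ℝ × ℝ :=
  (pderivU (fun a b => (x a b).1) u v,
   pderivU (fun a b => (x a b).2.1) u v,
   pderivU (fun a b => (x a b).2.2) u v)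

noncomputable def vecPderivV (x : ℝ → ℝ → ℝ × ℝ × ℝ) (u v : ℝ) : ℝ × ℝ × ℝ :=
  (pderivV (fun a b => (x a b).1) u v,
   pderivV (fun a b => (x a b).2.1) u v,
   pderivV (fun a b => (x a b).2.2) u v)

/-- The normalized Lorentz cross product of x_u and x_v (the unit normal). -/
noncomputable def lE (u v : ℝ) : ℝ × ℝ × ℝ :=
  (Real.sqrt |ip (lcross (vecPderivU xE u v) (vecPderivV xE u v))
      (lcross (vecPderivU xE u v) (vecPderivV xE u v))|)⁻¹ •
    lcross (vecPderivU xE u v) (vecPderivV xE u v)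

lemma derivCubic (a b c d u : ℝ) :
    deriv (fun t : ℝ => (a*t^3 + b*t^2 + c*t + d)/6) u = (3*a*u^2 + 2*b*u + c)/6 := by
  have h1 : HasDerivAt (fun t : ℝ => a*t^3 + b*t^2 + c*t + d) (3*a*u^2 + 2*b*u + c) u := by
    have h3 := (hasDerivAt_pow 3 u).const_mul a
    have h2 := (hasDerivAt_pow 2 u).const_mul b
    have hc := (hasDerivAt_id u).const_mul c
    convert ((h3.add h2).add hc).add_const d using 1
    · rfl
    · rfl
    · funext t; simp only [Pi.add_apply, id]
    · push_cast; ring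
  exact (h1.div_const 6).deriv

lemma xE_u : vecPderivU xE = fun u v => ((u^2+1)/2, (1-u^2)/2, u) := by
  funext u v
  simp only [vecPderivU, pderivU, xE]
  refine Prod.ext ?_ (Prod.ext ?_ ?_) <;> simp only
  · rw [show (fun t : ℝ => (t^3 - v^3 + 3*t - 3*v)/6)
        = fun t : ℝ => (1*t^3 + 0*t^2 + 3*t + (-v^3 - 3*v))/6 by funext t; ring, derivCubic]
    ring
  · rw [show (fun t : ℝ => (-t^3 + v^3 + 3*t - 3*v)/6)
        = fun t : ℝ => ((-1)*t^3 + 0*t^2 + 3*t + (v^3 - 3*v))/6 by funext t; ring, derivCubic]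
    ring
  · rw [show (fun t : ℝ => (3*t^2 - 3*v^2)/6)
        = fun t : ℝ => (0*t^3 + 3*t^2 + 0*t + (-3*v^2))/6 by funext t; ring, derivCubic]
    ring

lemma xE_v : vecPderivV xE = fun u v => (-(v^2+1)/2, (v^2-1)/2, -v) := by
  funext u v
  simp only [vecPderivV, pderivV, xE]
  refine Prod.ext ?_ (Prod.ext ?_ ?_) <;> simp only
  · rw [show (fun t : ℝ => (u^3 - t^3 + 3*u - 3*t)/6)
        = fun t : ℝ => ((-1)*t^3 + 0*t^2 + (-3)*t + (u^3 + 3*u))/6 by funext t; ring, derivCubic]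
    ring
  · rw [show (fun t : ℝ => (-u^3 + t^3 + 3*u - 3*t)/6)
        = fun t : ℝ => (1*t^3 + 0*t^2 + (-3)*t + (-u^3 + 3*u))/6 by funext t; ring, derivCubic]
    ring
  · rw [show (fun t : ℝ => (3*u^2 - 3*t^2)/6)
        = fun t : ℝ => (0*t^3 + (-3)*t^2 + 0*t + 3*u^2)/6 by funext t; ring, derivCubic]
    ring

lemma xE_uu (u v : ℝ) : vecPderivU (vecPderivU xE) u v = (u, -u, 1) := by
  rw [xE_u]
  simp only [vecPderivU, pderivU]
  refine Prod.ext ?_ (Prod.ext ?_ ?_) <;> simp only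
  · rw [show (fun t : ℝ => (t^2+1)/2)
        = fun t : ℝ => (0*t^3 + 3*t^2 + 0*t + 3)/6 by funext t; ring, derivCubic]
    ring
  · rw [show (fun t : ℝ => (1-t^2)/2)
        = fun t : ℝ => (0*t^3 + (-3)*t^2 + 0*t + 3)/6 by funext t; ring, derivCubic]
    ring
  · rw [show (fun t : ℝ => t)
        = fun t : ℝ => (0*t^3 + 0*t^2 + 6*t + 0)/6 by funext t; ring, derivCubic]
    ring

lemma xE_uv (u v : ℝ) : vecPderivV (vecPderivU xE) u v = (0, 0, 0) := by
  rw [xE_u]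
  simp only [vecPderivV, pderivV]
  refine Prod.ext ?_ (Prod.ext ?_ ?_) <;> simp

lemma xE_vv (u v : ℝ) : vecPderivV (vecPderivV xE) u v = (-v, v, -1) := by
  rw [xE_v]
  simp only [vecPderivV, pderivV]
  refine Prod.ext ?_ (Prod.ext ?_ ?_) <;> simp only
  · rw [show (fun t : ℝ => -(t^2+1)/2)
        = fun t : ℝ => (0*t^3 + (-3)*t^2 + 0*t + (-3))/6 by funext t; ring, derivCubic]
    ring
  · rw [show (fun t : ℝ => (t^2-1)/2)
        = fun t : ℝ => (0*t^3 + 3*t^2 + 0*t + (-3))/6 by funext t; ring, derivCubic]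
    ring
  · rw [show (fun t : ℝ => -t)
        = fun t : ℝ => (0*t^3 + 0*t^2 + (-6)*t + 0)/6 by funext t; ring, derivCubic]
    ring

lemma lE_eq (u v : ℝ) (h : u ≠ v) :
    lE u v = ((u-v)^2/2)⁻¹ • ((v-u)*(1+u*v)/2, (v-u)*(1-u*v)/2, (v^2-u^2)/2) := by
  have hn : lcross (vecPderivU xE u v) (vecPderivV xE u v)
      = ((v-u)*(1+u*v)/2, (v-u)*(1-u*v)/2, (v^2-u^2)/2) := by
    simp only [xE_u, xE_v, lcross]
    refine Prod.ext ?_ (Prod.ext ?_ ?_) <;> simp only <;> ring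
  have hip : ip ((v-u)*(1+u*v)/2, (v-u)*(1-u*v)/2, (v^2-u^2)/2)
      ((v-u)*(1+u*v)/2, (v-u)*(1-u*v)/2, (v^2-u^2)/2) = ((u-v)^2/2)^2 := by
    simp only [ip]; ring
  have hpos : (0:ℝ) ≤ (u-v)^2/2 := by positivity
  rw [lE, hn, hip, abs_of_nonneg (by positivity), Real.sqrt_sq hpos]

theorem stmt18 (u v : ℝ) (h : u ≠ v) :
    ip (lE u v) (lE u v) = 1 ∧
    ip (lE u v) (vecPderivU xE u v) = 0 ∧
    ip (lE u v) (vecPderivV xE u v) = 0 ∧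
    ip (vecPderivU (vecPderivU xE) u v) (lE u v) = 1 ∧
    ip (vecPderivV (vecPderivU xE) u v) (lE u v) = 0 ∧
    ip (vecPderivV (vecPderivV xE) u v) (lE u v) = 1 ∧
    ip (vecPderivV (vecPderivU xE) u v) (lE u v) / ((1/2) * (u - v)^2) = 0 ∧
    ((ip (vecPderivV (vecPderivU xE) u v) (lE u v))^2 -
        ip (vecPderivU (vecPderivU xE) u v) (lE u v) *
        ip (vecPderivV (vecPderivV xE) u v) (lE u v)) / ((1/2) * (u - v)^2)^2 =
      -4 / (u - v)^4 := by
  have hne : (u - v) ≠ 0 := sub_ne_zero_of_ne h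
  rw [lE_eq u v h, xE_uu, xE_uv, xE_vv, xE_u, xE_v]
  simp only [ip, Prod.smul_fst, Prod.smul_snd, smul_eq_mul]
  refine ⟨?_, ?_, ?_, ?_, ?_, ?_, ?_, ?_⟩ <;> field_simp <;> ring
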